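/- arXiv:2109.12705 — 2 statements merged into one kernel-verified Lean document; each statement's English description precedes it below -/
import Mathlib

section
/- For every integer n ≥ 2, Σ_{k=1}^{n} (-1)^k · (k-1)! · S(n,k) = 0, and for n = 1 this sum equals -1. -/
open Finset

/-- Stirling numbers of the second kind. -/
def S : ℕ → ℕ → ℕ
  | 0, 0 => 1
  | 0, _ + 1 => 0
  | _ + 1, 0 => 0
  | n + 1, k + 1 => (k + 1) * S n (k + 1) + S n k

/-- Ordered Bell (Fubini) numbers. -/
def B (n : ℕ) : ℕ := ∑ k ∈ range (n + 1), k.factorial * S n k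

/-!
Put `h k = (-1)^k k! S(n, k)`. The recurrence `S(n+1, k+1) = (k+1) S(n, k+1) + S(n, k)` says exactly
that the `(k+1)`-st term of the sum for `n + 1` is `h (k+1) - h k`, so the sum telescopes to
`h (n+1) - h 0 = -S(n, 0)`, which is `-1` for `n = 0` and `0` otherwise.
-/

open Nat

theorem S_eq_zero_of_lt : ∀ {n k : ℕ}, n < k → S n k = 0
  | 0, _ + 1, _ => rfl
  | n + 1, k + 1, h => by
    rw [S, S_eq_zero_of_lt (by omega : n < k + 1), S_eq_zero_of_lt (by omega : n < k), mul_zero]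

theorem neg_one_pow_mul_factorial_mul_S_succ_succ (n k : ℕ) :
    (-1 : ℤ) ^ (k + 1) * k ! * S (n + 1) (k + 1) =
      (-1) ^ (k + 1) * (k + 1)! * S n (k + 1) - (-1) ^ k * k ! * S n k := by
  rw [S, factorial_succ]
  push_cast
  ring

theorem sum_Icc_neg_one_pow_mul_factorial_mul_S_succ (n : ℕ) :
    ∑ k ∈ Icc 1 (n + 1), (-1 : ℤ) ^ k * (k - 1)! * S (n + 1) k = -S n 0 := by
  set h : ℕ → ℤ := fun k ↦ (-1) ^ k * k ! * S n k
  calc ∑ k ∈ Icc 1 (n + 1), (-1 : ℤ) ^ k * (k - 1)! * S (n + 1) k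
      = ∑ k ∈ Ico 0 (n + 1), (-1 : ℤ) ^ (k + 1) * k ! * S (n + 1) (k + 1) := by
        rw [← Ico_add_one_right_eq_Icc,
          ← sum_Ico_add' (fun k ↦ (-1 : ℤ) ^ k * (k - 1)! * S (n + 1) k) 0 (n + 1) 1]
        rfl
    _ = ∑ k ∈ Ico 0 (n + 1), (h (k + 1) - h k) :=
        sum_congr rfl fun k _ ↦ neg_one_pow_mul_factorial_mul_S_succ_succ n k
    _ = h (n + 1) - h 0 := sum_Ico_sub h (Nat.zero_le _)
    _ = -S n 0 := by simp [h, S_eq_zero_of_lt (lt_add_one n)]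

theorem stmt8 :
    (∀ n : ℕ, 2 ≤ n → ∑ k ∈ Icc 1 n, (-1 : ℤ) ^ k * (k - 1).factorial * S n k = 0) ∧
    ∑ k ∈ Icc 1 1, (-1 : ℤ) ^ k * (k - 1).factorial * S 1 k = -1 := by
  refine ⟨fun n hn ↦ ?_, sum_Icc_neg_one_pow_mul_factorial_mul_S_succ 0⟩
  obtain ⟨m, rfl⟩ : ∃ m, n = m + 1 + 1 := ⟨n - 2, by omega⟩
  rw [sum_Icc_neg_one_pow_mul_factorial_mul_S_succ, S, Nat.cast_zero, neg_zero]
end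

section
/- For every integer n ≥ 1, Σ_{k=0}^{⌊n/2⌋} (2k)!·S(n,2k) = (B(n) + (-1)^n)/2, i.e., 2·Σ_{k=0}^{⌊n/2⌋} (2k)!·S(n,2k) = B(n) + (-1)^n. -/
/-!
Under the recurrence `S(n+1,k+1) = (k+1) S(n,k+1) + S(n,k)` the alternating sum
`∑ₖ (-1)^k k! S(n+1,k)` telescopes to minus the same sum for `n`; hence `∑ₖ (-1)^k k! S(n,k) = (-1)^n`.
Adding this to `B(n) = ∑ₖ k! S(n,k)` doubles the even-indexed terms and cancels the odd ones.
-/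

open Finset

open Nat

theorem S_eq_stirlingSecond : S = stirlingSecond := by
  funext n k
  induction n generalizing k with
  | zero => cases k <;> rfl
  | succ n ih =>
    cases k with
    | zero => rfl
    | succ k => simp only [S, stirlingSecond_succ_succ, ih]

theorem sum_neg_one_pow_mul_factorial_mul_stirlingSecond {R : Type*} [CommRing R] (n : ℕ) :
    ∑ k ∈ range (n + 1), (-1 : R) ^ k * k ! * stirlingSecond n k = (-1) ^ n := by
  induction n with
  | zero => simp
  | succ n ih =>
    set f : ℕ → R := fun k ↦ (-1) ^ k * k ! * k * stirlingSecond n k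
    have hterm : ∀ k, (-1 : R) ^ (k + 1) * (k + 1)! * stirlingSecond (n + 1) (k + 1) =
        f (k + 1) - f k - (-1) ^ k * k ! * stirlingSecond n k := by
      intro k
      simp only [f, stirlingSecond_succ_succ, factorial_succ]
      push_cast
      ring
    have hf : f (n + 1) = 0 := by simp [f, stirlingSecond_eq_zero_of_lt (lt_add_one n)]
    rw [sum_range_succ', stirlingSecond_succ_zero, Nat.cast_zero, mul_zero, add_zero]
    rw [sum_congr rfl fun k _ ↦ hterm k, sum_sub_distrib, sum_range_sub, hf, ih]
    simp [f, pow_succ]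

theorem sum_range_div_two_two_mul_eq_sum_filter_even {M : Type*} [AddCommMonoid M] (f : ℕ → M)
    (n : ℕ) : ∑ k ∈ range (n / 2 + 1), f (2 * k) = ∑ k ∈ range (n + 1) with Even k, f k := by
  have himage : (range (n + 1)).filter Even = (range (n / 2 + 1)).image (2 * ·) := by
    ext k
    simp only [mem_filter, mem_range, mem_image, even_iff]
    constructor
    · rintro ⟨hk, heven⟩
      exact ⟨k / 2, by omega, by omega⟩
    · rintro ⟨j, hj, rfl⟩
      omega
  rw [himage, sum_image fun a _ b _ h ↦ by omega]

theorem two_mul_sum_filter_even {R : Type*} [CommRing R] (s : Finset ℕ) (f : ℕ → R) :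
    2 * ∑ k ∈ s with Even k, f k = ∑ k ∈ s, (1 + (-1) ^ k) * f k := by
  rw [sum_filter, mul_sum]
  refine sum_congr rfl fun k _ ↦ ?_
  rcases k.even_or_odd with hk | hk
  · rw [if_pos hk, hk.neg_one_pow]
    ring
  · rw [if_neg (not_even_iff_odd.mpr hk), hk.neg_one_pow]
    ring

theorem stmt9_general (n : ℕ) :
    2 * ∑ k ∈ range (n / 2 + 1), ((2 * k).factorial * S n (2 * k) : ℤ) =
      (B n : ℤ) + (-1) ^ n := by
  calc 2 * ∑ k ∈ range (n / 2 + 1), ((2 * k)! * S n (2 * k) : ℤ)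
      = ∑ k ∈ range (n + 1), (1 + (-1) ^ k) * (k ! * S n k : ℤ) := by
        rw [sum_range_div_two_two_mul_eq_sum_filter_even (fun k ↦ (k ! * S n k : ℤ)),
          two_mul_sum_filter_even]
    _ = B n + ∑ k ∈ range (n + 1), (-1 : ℤ) ^ k * k ! * S n k := by
        simp only [B, add_mul, one_mul, sum_add_distrib, mul_assoc]
        push_cast
        rfl
    _ = B n + (-1) ^ n := by
        rw [S_eq_stirlingSecond, sum_neg_one_pow_mul_factorial_mul_stirlingSecond]

theorem stmt9 (n : ℕ) (hn : 1 ≤ n) :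
    2 * ∑ k ∈ range (n / 2 + 1), ((2 * k).factorial * S n (2 * k) : ℤ) =
      (B n : ℤ) + (-1) ^ n :=
  stmt9_general n
end
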